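/- arXiv:2107.08423 — 4 statements merged into one kernel-verified Lean document; each statement's English description precedes it below -/
import Mathlib

section
/- Let k ≥ 2 and 0 ≤ m ≤ ⌊(k−1)/2⌋, and let r be the fixed point of the binomial CDF w_{k,m}(p) = Σ_{i=0}^{m} C(k,i) p^i (1−p)^{k−i}, i.e., w_{k,m}(r) = r with r ∈ (0,1). If r > m/(k−1), then r ≤ (m+1)·C(k,m)·r^m (1−r)^{k−m}. -/
/-! The binomial probabilities `C(k,i) r^i (1-r)^(k-i)` increase in `i` as long as
`i ≤ (k+1) r`, and `m/(k-1) < r` puts all of `0, …, m` in that range; so the CDF at `m`,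
which equals `r`, is at most `m + 1` times its largest term, the one at `i = m`. -/

/-- The binomial CDF: probability that `Bin(k,p) ≤ m`. -/
noncomputable def binCdf (k m : ℕ) (p : ℝ) : ℝ :=
  ∑ i ∈ Finset.range (m + 1), (k.choose i : ℝ) * p ^ i * (1 - p) ^ (k - i)

open Polynomial

lemma bernsteinPolynomial_eval_real (n ν : ℕ) (p : ℝ) :
    (bernsteinPolynomial ℝ n ν).eval p = n.choose ν * p ^ ν * (1 - p) ^ (n - ν) := by
  simp [bernsteinPolynomial]

lemma binCdf_eq_sum_bernsteinPolynomial (k m : ℕ) (p : ℝ) :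
    binCdf k m p = ∑ i ∈ Finset.range (m + 1), (bernsteinPolynomial ℝ k i).eval p := by
  simp only [binCdf, bernsteinPolynomial_eval_real]

lemma bernsteinPolynomial_eval_le_succ {n ν : ℕ} {p : ℝ} (hν : ν < n) (hp : p ≤ 1)
    (hνp : (ν + 1 : ℝ) ≤ (n + 1) * p) :
    (bernsteinPolynomial ℝ n ν).eval p ≤ (bernsteinPolynomial ℝ n (ν + 1)).eval p := by
  have hp0 : 0 < p := by
    have : (0 : ℝ) < (n + 1) * p := by linarith [(ν.cast_nonneg : (0 : ℝ) ≤ ν)]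
    exact pos_of_mul_pos_right this (by positivity)
  have hchoose : (n.choose (ν + 1) : ℝ) * (ν + 1) = n.choose ν * (n - ν) := by
    rw [← Nat.cast_sub hν.le]
    exact_mod_cast Nat.choose_succ_right_eq n ν
  have hratio : (n.choose ν : ℝ) * (1 - p) ≤ n.choose (ν + 1) * p := by
    have hCν : (0 : ℝ) ≤ n.choose ν := by positivity
    refine le_of_mul_le_mul_right ?_ (by positivity : (0 : ℝ) < ν + 1)
    nlinarith [mul_le_mul_of_nonneg_left hνp hCν]
  have hcommon : 0 ≤ p ^ ν * (1 - p) ^ (n - (ν + 1)) := by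
    have : 0 ≤ 1 - p := by linarith
    positivity
  rw [bernsteinPolynomial_eval_real, bernsteinPolynomial_eval_real,
    show n - ν = n - (ν + 1) + 1 by omega]
  calc (n.choose ν : ℝ) * p ^ ν * (1 - p) ^ (n - (ν + 1) + 1)
      = (n.choose ν * (1 - p)) * (p ^ ν * (1 - p) ^ (n - (ν + 1))) := by ring
    _ ≤ (n.choose (ν + 1) * p) * (p ^ ν * (1 - p) ^ (n - (ν + 1))) := by gcongr
    _ = n.choose (ν + 1) * p ^ (ν + 1) * (1 - p) ^ (n - (ν + 1)) := by ring

lemma bernsteinPolynomial_eval_monotoneOn {n m : ℕ} {p : ℝ} (hmn : m ≤ n) (hp : p ≤ 1)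
    (hmp : (m : ℝ) ≤ (n + 1) * p) :
    MonotoneOn (fun ν ↦ (bernsteinPolynomial ℝ n ν).eval p) (Set.Iic m) := by
  refine monotoneOn_of_le_add_one Set.ordConnected_Iic fun ν _ _ hν ↦ ?_
  have hνm : ((ν + 1 : ℕ) : ℝ) ≤ m := by exact_mod_cast hν
  push_cast at hνm
  exact bernsteinPolynomial_eval_le_succ (by simp at hν; omega) hp (hνm.trans hmp)

lemma binCdf_le_succ_mul_bernsteinPolynomial_eval {k m : ℕ} {p : ℝ} (hmk : m ≤ k) (hp : p ≤ 1)
    (hmp : (m : ℝ) ≤ (k + 1) * p) :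
    binCdf k m p ≤ (m + 1) * (bernsteinPolynomial ℝ k m).eval p := by
  have hle : ∀ i ∈ Finset.range (m + 1),
      (bernsteinPolynomial ℝ k i).eval p ≤ (bernsteinPolynomial ℝ k m).eval p := by
    intro i hi
    have him : i ≤ m := Finset.mem_range_succ_iff.1 hi
    exact bernsteinPolynomial_eval_monotoneOn hmk hp hmp him (Set.mem_Iic.2 le_rfl) him
  simpa [binCdf_eq_sum_bernsteinPolynomial] using Finset.sum_le_card_nsmul _ _ _ hle

theorem binCdf_fixed_point_bound_general (k m : ℕ) (hk : 2 ≤ k)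
    (r : ℝ) (hr : r ∈ Set.Ioo (0:ℝ) 1) (hfix : binCdf k m r = r)
    (hgt : (m : ℝ) / ((k : ℝ) - 1) < r) :
    r ≤ ((m : ℝ) + 1) * (k.choose m : ℝ) * r ^ m * (1 - r) ^ (k - m) := by
  obtain ⟨hr0, hr1⟩ := hr
  have hk1 : (0 : ℝ) < k - 1 := by
    have : (2 : ℝ) ≤ k := by exact_mod_cast hk
    linarith
  have hmr : (m : ℝ) < (k - 1) * r := by rwa [div_lt_iff₀' hk1] at hgt
  have hmk : m ≤ k := by
    have : (m : ℝ) ≤ k := by nlinarith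
    exact_mod_cast this
  calc r = binCdf k m r := hfix.symm
    _ ≤ (m + 1) * (bernsteinPolynomial ℝ k m).eval r :=
      binCdf_le_succ_mul_bernsteinPolynomial_eval hmk hr1.le (by nlinarith)
    _ = _ := by rw [bernsteinPolynomial_eval_real]; ring

/-- bound on the fixed point of the binomial CDF when it exceeds m/(k-1). -/
theorem binCdf_fixed_point_bound (k m : ℕ) (hk : 2 ≤ k) (hm : m ≤ (k - 1) / 2)
    (r : ℝ) (hr : r ∈ Set.Ioo (0:ℝ) 1) (hfix : binCdf k m r = r)
    (hgt : (m : ℝ) / ((k : ℝ) - 1) < r) :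
    r ≤ ((m : ℝ) + 1) * (k.choose m : ℝ) * r ^ m * (1 - r) ^ (k - m) :=
  binCdf_fixed_point_bound_general k m hk r hr hfix hgt
end

section
/- For every integer k ≥ 2 and every integer m with 0 ≤ m ≤ k−1, the unique fixed point r ∈ (0,1) of the binomial CDF w_{k,m}(p) = P(X_k(p) ≤ m) satisfies |w_{k,m}'(r)| > 1, where w_{k,m}'(p) = −k·C(k−1,m)·p^m(1−p)^{k−m−1}. -/
open Polynomial

namespace bernsteinPolynomial

variable {R : Type*} [CommRing R]

theorem derivative_sum_range (n m : ℕ) :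
    derivative (∑ ν ∈ Finset.range (m + 1), bernsteinPolynomial R n ν) =
      -n * bernsteinPolynomial R (n - 1) m := by
  induction m with
  | zero => simp [derivative_zero]
  | succ m ih =>
    rw [Finset.sum_range_succ, derivative_add, ih, derivative_succ]
    ring

theorem X_mul_one_sub_X_mul_derivative (n ν : ℕ) :
    X * (1 - X) * derivative (bernsteinPolynomial R n ν) =
      ((ν : R[X]) - (n : R[X]) * X) * bernsteinPolynomial R n ν := by
  rcases lt_or_ge n ν with h | h
  · simp [eq_zero_of_lt R h]
  obtain ⟨j, rfl⟩ := Nat.exists_eq_add_of_le h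
  simp only [bernsteinPolynomial, Nat.add_sub_cancel_left]
  rcases ν with _ | ν <;> rcases j with _ | j <;>
    simp [derivative_mul, derivative_pow_succ] <;> ring

theorem sum_range_mul_sub (n m : ℕ) :
    ∑ ν ∈ Finset.range (m + 1), ((n : R[X]) * X - (ν : R[X])) * bernsteinPolynomial R n ν =
      (n : R[X]) * X * (1 - X) * bernsteinPolynomial R (n - 1) m := by
  calc _ = -(X * (1 - X) *
        derivative (∑ ν ∈ Finset.range (m + 1), bernsteinPolynomial R n ν)) := by
        simp only [derivative_sum, Finset.mul_sum, X_mul_one_sub_X_mul_derivative,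
          ← Finset.sum_neg_distrib, ← neg_mul, neg_sub]
    _ = _ := by rw [derivative_sum_range]; ring

theorem eval_eq (n ν : ℕ) (p : R) :
    (bernsteinPolynomial R n ν).eval p = n.choose ν * p ^ ν * (1 - p) ^ (n - ν) := by
  simp [bernsteinPolynomial]

theorem eval_nonneg (n ν : ℕ) {p : ℝ} (hp : p ∈ Set.Icc 0 1) :
    0 ≤ (bernsteinPolynomial ℝ n ν).eval p := by
  have : 0 ≤ 1 - p := by linarith [hp.2]
  have := hp.1
  rw [eval_eq]
  positivity

theorem eval_pos {n ν : ℕ} (h : ν ≤ n) {p : ℝ} (hp : p ∈ Set.Ioo 0 1) :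
    0 < (bernsteinPolynomial ℝ n ν).eval p := by
  have : 0 < 1 - p := by linarith [hp.2]
  have := hp.1
  have := Nat.choose_pos h
  rw [eval_eq]
  positivity

end bernsteinPolynomial

open Finset

theorem binCdf_eq_eval (k m : ℕ) :
    binCdf k m = fun p ↦ (∑ i ∈ range (m + 1), bernsteinPolynomial ℝ k i).eval p := by
  ext p
  simp [binCdf, eval_finsetSum, bernsteinPolynomial.eval_eq]

theorem hasDerivAt_binCdf (k m : ℕ) (p : ℝ) :
    HasDerivAt (binCdf k m)
      (-(k : ℝ) * ((k - 1).choose m : ℝ) * p ^ m * (1 - p) ^ (k - m - 1)) p := by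
  rw [binCdf_eq_eval]
  refine (Polynomial.hasDerivAt _ p).congr_deriv ?_
  rw [bernsteinPolynomial.derivative_sum_range, eval_mul, bernsteinPolynomial.eval_eq,
    Nat.sub_right_comm]
  simp only [eval_neg, eval_natCast]
  ring

theorem mul_one_sub_mul_sub_one_of_binCdf_eq_self {k m : ℕ} (hm : m ≤ k) {r : ℝ}
    (hfix : binCdf k m r = r) :
    r * (1 - r) * (k * (bernsteinPolynomial ℝ (k - 1) m).eval r - 1) =
      (1 - r) * ∑ i ∈ range (m + 1), (m - i : ℝ) * (bernsteinPolynomial ℝ k i).eval r +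
        r * ∑ i ∈ Ico (m + 1) (k + 1),
          (i - (m + 1) : ℝ) * (bernsteinPolynomial ℝ k i).eval r := by
  set t : ℕ → ℝ := fun i ↦ (bernsteinPolynomial ℝ k i).eval r
  have lower_mass : ∑ i ∈ range (m + 1), t i = r := by
    rw [← hfix, binCdf_eq_eval]
    exact (eval_finsetSum _ _ _).symm
  have total_mass : ∑ i ∈ range (k + 1), t i = 1 := by
    simpa [eval_finsetSum] using congrArg (eval r) (bernsteinPolynomial.sum ℝ k)
  have mean : ∑ i ∈ range (k + 1), (i : ℝ) * t i = k * r := by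
    simpa [eval_finsetSum] using congrArg (eval r) (bernsteinPolynomial.sum_smul ℝ k)
  have lower_moment : ∑ i ∈ range (m + 1), (k * r - i) * t i =
      r * (1 - r) * (k * (bernsteinPolynomial ℝ (k - 1) m).eval r) := by
    have h := congrArg (eval r) (bernsteinPolynomial.sum_range_mul_sub (R := ℝ) k m)
    simp only [eval_finsetSum, eval_mul, eval_sub, eval_natCast, eval_X, eval_one] at h
    linear_combination h
  rw [← sum_range_add_sum_Ico _ (by omega : m + 1 ≤ k + 1)] at total_mass mean
  simp only [sub_mul, sum_sub_distrib, ← mul_sum] at lower_moment ⊢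
  linear_combination
    -lower_moment - r * mean + r * (m + 1) * total_mass + (k * r - m - r) * lower_mass

theorem lower_add_upper_deviation_pos {k m : ℕ} (hk : 2 ≤ k) {r : ℝ}
    (hr : r ∈ Set.Ioo 0 1) :
    0 < (1 - r) * ∑ i ∈ range (m + 1), (m - i : ℝ) * (bernsteinPolynomial ℝ k i).eval r +
      r * ∑ i ∈ Ico (m + 1) (k + 1),
        (i - (m + 1) : ℝ) * (bernsteinPolynomial ℝ k i).eval r := by
  obtain ⟨hr0, hr1⟩ := hr
  have lower_nonneg : ∀ i ∈ range (m + 1),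
      0 ≤ (m - i : ℝ) * (bernsteinPolynomial ℝ k i).eval r := fun i hi ↦ by
    have : (i : ℝ) ≤ m := by exact_mod_cast Nat.lt_succ_iff.1 (mem_range.1 hi)
    exact mul_nonneg (by linarith) (bernsteinPolynomial.eval_nonneg k i ⟨hr0.le, hr1.le⟩)
  have upper_nonneg : ∀ i ∈ Ico (m + 1) (k + 1),
      0 ≤ (i - (m + 1) : ℝ) * (bernsteinPolynomial ℝ k i).eval r := fun i hi ↦ by
    have : (m + 1 : ℝ) ≤ i := by exact_mod_cast (mem_Ico.1 hi).1
    exact mul_nonneg (by linarith) (bernsteinPolynomial.eval_nonneg k i ⟨hr0.le, hr1.le⟩)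
  rcases Nat.eq_zero_or_pos m with hm0 | hm0
  · have : (m + 1 : ℝ) < k := by exact_mod_cast (by omega : m + 1 < k)
    have upper_pos := sum_pos' upper_nonneg ⟨k, mem_Ico.2 ⟨by omega, by omega⟩,
      mul_pos (by linarith) (bernsteinPolynomial.eval_pos le_rfl ⟨hr0, hr1⟩)⟩
    exact add_pos_of_nonneg_of_pos (mul_nonneg (by linarith) (sum_nonneg lower_nonneg))
      (mul_pos hr0 upper_pos)
  · have : (0 : ℝ) < m := by exact_mod_cast hm0
    have lower_pos := sum_pos' lower_nonneg ⟨0, by simp,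
      mul_pos (by simpa using this) (bernsteinPolynomial.eval_pos (by omega) ⟨hr0, hr1⟩)⟩
    exact add_pos_of_pos_of_nonneg (mul_pos (by linarith) lower_pos)
      (mul_nonneg hr0.le (sum_nonneg upper_nonneg))

theorem one_lt_mul_eval_bernsteinPolynomial_of_binCdf_eq_self {k m : ℕ} (hk : 2 ≤ k)
    (hm : m ≤ k) {r : ℝ} (hr : r ∈ Set.Ioo 0 1) (hfix : binCdf k m r = r) :
    1 < k * (bernsteinPolynomial ℝ (k - 1) m).eval r := by
  have h := mul_one_sub_mul_sub_one_of_binCdf_eq_self hm hfix ▸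
    lower_add_upper_deviation_pos (m := m) hk hr
  have : 0 < r * (1 - r) := mul_pos hr.1 (by linarith [hr.2])
  linarith [pos_of_mul_pos_right h this.le]

/-- at the unique interior fixed point of the binomial CDF, the absolute
value of its derivative `-k·C(k-1,m)·p^m(1-p)^{k-m-1}` exceeds 1. -/
theorem binCdf_derivative_at_fixed_point (k m : ℕ) (hk : 2 ≤ k) (hm : m ≤ k - 1)
    (r : ℝ) (hr : r ∈ Set.Ioo (0:ℝ) 1) (hfix : binCdf k m r = r) :
    deriv (binCdf k m) r = -(k : ℝ) * ((k - 1).choose m : ℝ) * r ^ m * (1 - r) ^ (k - m - 1) ∧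
    1 < |deriv (binCdf k m) r| := by
  have hderiv := (hasDerivAt_binCdf k m r).deriv
  refine ⟨hderiv, lt_abs.2 (Or.inr ?_)⟩
  have hslope := one_lt_mul_eval_bernsteinPolynomial_of_binCdf_eq_self hk (by omega) hr hfix
  rw [bernsteinPolynomial.eval_eq, Nat.sub_right_comm] at hslope
  rw [hderiv]
  linarith
end

section
/- Let a ∈ (0,1) with a ≠ 1/2 be rational, and define V_k = k·P(X_{k−1} = ⌊ka⌋) where X_{k−1} ~ Bin(k−1, 1/2), i.e., V_k = k·C(k−1, ⌊ka⌋)·2^{−(k−1)}. Then V_k → 0 as k → ∞. -/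
/-!
A single term of the binomial expansion of `(x + (1 - x)) ^ n` is at most `1`, which with
`x = a` gives `C(n, m) ≤ exp (n H(a) + O(1))` whenever `m` stays within bounded distance of
`a n`, where `H` is the binary entropy. Hence `C(n, ⌊(n + 1) a⌋) / 2 ^ n ≤ K r ^ n` with
`r = exp (H(a) - log 2)`, and `r < 1` because `H(a) < log 2` for `a ≠ 1/2`; the polynomial factor
`n + 1` does not affect the geometric decay.
-/

open Filter Real Topology

lemma choose_mul_pow_mul_one_sub_pow_le_one {x : ℝ} (hx0 : 0 ≤ x) (hx1 : x ≤ 1) (n m : ℕ) :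
    (n.choose m : ℝ) * x ^ m * (1 - x) ^ (n - m) ≤ 1 := by
  rcases le_or_gt m n with hmn | hnm
  · have h1x : 0 ≤ 1 - x := sub_nonneg.2 hx1
    calc (n.choose m : ℝ) * x ^ m * (1 - x) ^ (n - m)
        = x ^ m * (1 - x) ^ (n - m) * n.choose m := by ring
      _ ≤ ∑ j ∈ Finset.range (n + 1), x ^ j * (1 - x) ^ (n - j) * n.choose j :=
          Finset.single_le_sum (f := fun j => x ^ j * (1 - x) ^ (n - j) * n.choose j)
            (fun j _ => by positivity) (Finset.mem_range.2 (Nat.lt_succ_of_le hmn))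
      _ = 1 := by rw [← add_pow, add_sub_cancel, one_pow]
  · simp [Nat.choose_eq_zero_of_lt hnm]

lemma choose_le_exp_binEntropy {x : ℝ} (hx0 : 0 < x) (hx1 : x < 1) {n m : ℕ} (hmn : m ≤ n) :
    (n.choose m : ℝ) ≤ exp (n * binEntropy x + (m - x * n) * (log (1 - x) - log x)) := by
  have h1x : 0 < 1 - x := sub_pos.2 hx1
  have hterm : x ^ m * (1 - x) ^ (n - m) = exp (m * log x + (n - m) * log (1 - x)) := by
    rw [exp_add, ← Nat.cast_sub hmn, exp_nat_mul, exp_nat_mul, exp_log hx0, exp_log h1x]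
  have hexponent : n * binEntropy x + (m - x * n) * (log (1 - x) - log x)
      = -(m * log x + (n - m) * log (1 - x)) := by
    simp only [binEntropy, log_inv]
    ring
  rw [hexponent, exp_neg, ← hterm, ← one_div, le_div_iff₀ (by positivity)]
  simpa [mul_assoc] using choose_mul_pow_mul_one_sub_pow_le_one hx0.le hx1.le n m

lemma choose_div_two_pow_le {x D : ℝ} (hx0 : 0 < x) (hx1 : x < 1) {n m : ℕ} (hmn : m ≤ n)
    (hm : |(m : ℝ) - x * n| ≤ D) :
    (n.choose m : ℝ) / 2 ^ n ≤ exp (D * |log (1 - x) - log x|) * exp (binEntropy x - log 2) ^ n := by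
  have hdev : (m - x * n) * (log (1 - x) - log x) ≤ D * |log (1 - x) - log x| := by
    grw [← hm, ← abs_mul]
    exact le_abs_self _
  have htwo : (2 : ℝ) ^ n = exp (n * log 2) := by rw [exp_nat_mul, exp_log two_pos]
  rw [div_le_iff₀ (by positivity), ← exp_nat_mul, htwo, mul_assoc, ← exp_add, ← exp_add]
  refine (choose_le_exp_binEntropy hx0 hx1 hmn).trans (exp_le_exp.2 ?_)
  linear_combination hdev

lemma floor_succ_mul_le {a : ℝ} (ha1 : a < 1) (n : ℕ) : ⌊((n : ℝ) + 1) * a⌋₊ ≤ n := by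
  refine Nat.lt_succ_iff.1 ((Nat.floor_lt' n.succ_ne_zero).2 ?_)
  push_cast
  exact mul_lt_of_lt_one_right (by positivity) ha1

lemma abs_floor_succ_mul_sub_mul_le {a : ℝ} (ha0 : 0 ≤ a) (ha1 : a ≤ 1) (n : ℕ) :
    |(⌊((n : ℝ) + 1) * a⌋₊ : ℝ) - a * n| ≤ 1 := by
  have hle := Nat.floor_le (a := ((n : ℝ) + 1) * a) (by positivity)
  have hlt := Nat.lt_floor_add_one (((n : ℝ) + 1) * a)
  rw [abs_le]
  constructor <;> linarith

theorem central_binomial_floor_tendsto_zero_general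
    (a : ℝ) (ha : a ∈ Set.Ioo (0:ℝ) 1) (hne : a ≠ 1 / 2) :
    Filter.Tendsto
      (fun k : ℕ => (k : ℝ) * ((k - 1).choose (Nat.floor ((k : ℝ) * a)) : ℝ) / 2 ^ (k - 1))
      Filter.atTop (nhds 0) := by
  obtain ⟨ha0, ha1⟩ := ha
  set r := exp (binEntropy a - log 2)
  have hr : r < 1 := exp_lt_one_iff.2 (sub_neg.2 (binEntropy_lt_log_two.2 (by rwa [← one_div])))
  set K := exp (1 * |log (1 - a) - log a|)
  have hlim : Tendsto (fun n : ℕ => K * ((n : ℝ) * r ^ n + r ^ n)) atTop (𝓝 0) := by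
    simpa using ((tendsto_self_mul_const_pow_of_lt_one (exp_pos _).le hr).add
      (tendsto_pow_atTop_nhds_zero_of_lt_one (exp_pos _).le hr)).const_mul K
  rw [← tendsto_add_atTop_iff_nat 1]
  refine squeeze_zero (fun n => by positivity) (fun n => ?_) hlim
  push_cast [Nat.add_sub_cancel]
  calc ((n : ℝ) + 1) * (n.choose ⌊((n : ℝ) + 1) * a⌋₊ : ℝ) / 2 ^ n
      = ((n : ℝ) + 1) * ((n.choose ⌊((n : ℝ) + 1) * a⌋₊ : ℝ) / 2 ^ n) := mul_div_assoc _ _ _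
    _ ≤ ((n : ℝ) + 1) * (K * r ^ n) := by
        gcongr
        exact choose_div_two_pow_le ha0 ha1 (floor_succ_mul_le ha1 n)
          (abs_floor_succ_mul_sub_mul_le ha0.le ha1.le n)
    _ = K * ((n : ℝ) * r ^ n + r ^ n) := by ring

/-- `V_k = k·C(k-1,⌊ka⌋)·2^{-(k-1)} → 0` for rational `a ∈ (0,1)`, `a ≠ 1/2`. -/
theorem central_binomial_floor_tendsto_zero
    (a : ℝ) (ha : a ∈ Set.Ioo (0:ℝ) 1) (hne : a ≠ 1 / 2) (hrat : ∃ q : ℚ, a = (q : ℝ)) :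
    Filter.Tendsto
      (fun k : ℕ => (k : ℝ) * ((k - 1).choose (Nat.floor ((k : ℝ) * a)) : ℝ) / 2 ^ (k - 1))
      Filter.atTop (nhds 0) :=
  central_binomial_floor_tendsto_zero_general a ha hne
end

section
/- Let X, Y be i.i.d. Bin(2,p) random variables. The function w_2(p) = P(2X − Y < 2) is strictly decreasing on [0,1] and has a unique fixed point p* ∈ (0.5, 0.68), and |w_2'(p*)| < 1. -/
/-- `w_2(p) = P(2X - Y < 2)` for `X, Y` i.i.d. `Bin(2,p)`. -/
noncomputable def wTwo (p : ℝ) : ℝ :=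
  ∑ xy ∈ (Finset.range 3 ×ˢ Finset.range 3).filter (fun xy => 2 * xy.1 < 2 + xy.2),
    ((Nat.choose 2 xy.1 : ℝ) * p ^ xy.1 * (1 - p) ^ (2 - xy.1)) *
      ((Nat.choose 2 xy.2 : ℝ) * p ^ xy.2 * (1 - p) ^ (2 - xy.2))

/-!
Expanding the five terms gives `w₂(p) = 2p⁴ - 6p³ + 5p² - 2p + 1`, whose derivative
`8p³ - 18p² + 10p - 2` is negative on `(0, 1)`. Hence `w₂(p) - p` is strictly decreasing, so
there is at most one fixed point, and since `w₂(0.5) > 0.5` while `w₂(0.6) < 0.6` it lies in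
`(0.5, 0.6)`, where the derivative stays between `-1` and `-1/2`.
-/

open Set

theorem exists_mem_Ioo_apply_eq_self {f : ℝ → ℝ} {a b : ℝ} (hab : a ≤ b)
    (hf : ContinuousOn f (Icc a b)) (ha : a < f a) (hb : f b < b) :
    ∃ r ∈ Ioo a b, f r = r := by
  have hg : ContinuousOn (fun x => f x - x) (Icc a b) := hf.sub continuousOn_id
  obtain ⟨r, hr, hr0⟩ := intermediate_value_Ioo' hab hg ⟨sub_neg.2 hb, sub_pos.2 ha⟩
  exact ⟨r, hr, sub_eq_zero.1 hr0⟩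

theorem StrictAntiOn.eq_of_apply_eq_self {f : ℝ → ℝ} {s : Set ℝ} (hf : StrictAntiOn f s)
    {x y : ℝ} (hx : x ∈ s) (hy : y ∈ s) (hfx : f x = x) (hfy : f y = y) : x = y := by
  rcases lt_trichotomy x y with h | h | h
  · linarith [hf hx hy h]
  · exact h
  · linarith [hf hy hx h]

theorem wTwo_eq (p : ℝ) : wTwo p = 2 * p ^ 4 - 6 * p ^ 3 + 5 * p ^ 2 - 2 * p + 1 := by
  simp [wTwo, Finset.sum_filter, Finset.sum_product, Finset.sum_range_succ]
  ring

theorem hasDerivAt_wTwo (x : ℝ) :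
    HasDerivAt wTwo (8 * x ^ 3 - 18 * x ^ 2 + 10 * x - 2) x := by
  rw [show wTwo = fun p => 2 * p ^ 4 - 6 * p ^ 3 + 5 * p ^ 2 - 2 * p + 1 from funext wTwo_eq]
  refine (((((hasDerivAt_pow 4 x).const_mul 2).sub ((hasDerivAt_pow 3 x).const_mul 6)).add
    ((hasDerivAt_pow 2 x).const_mul 5)).sub ((hasDerivAt_id x).const_mul 2)).add_const 1
    |>.congr_deriv ?_
  norm_num
  ring

theorem continuous_wTwo : Continuous wTwo :=
  continuous_iff_continuousAt.2 fun x => (hasDerivAt_wTwo x).continuousAt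

theorem deriv_wTwo_neg {x : ℝ} (hx₀ : 0 < x) (hx₁ : x < 1) :
    8 * x ^ 3 - 18 * x ^ 2 + 10 * x - 2 < 0 := by
  nlinarith [sq_nonneg (2 * x - 1), sq_nonneg (3 * x - 1), mul_pos hx₀ (sub_pos.2 hx₁),
    mul_nonneg (mul_nonneg hx₀.le hx₀.le) (sub_pos.2 hx₁).le, sq_nonneg x, sq_nonneg (x - 1)]

theorem neg_one_lt_deriv_wTwo {x : ℝ} (hx₀ : 1 / 2 < x) (hx₁ : x < 3 / 5) :
    -1 < 8 * x ^ 3 - 18 * x ^ 2 + 10 * x - 2 := by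
  nlinarith [sq_nonneg (x - 1 / 2), sq_nonneg x, mul_pos (sub_pos.2 hx₀) (sub_pos.2 hx₁)]

theorem strictAntiOn_wTwo : StrictAntiOn wTwo (Icc 0 1) := by
  refine strictAntiOn_of_deriv_neg (convex_Icc 0 1) continuous_wTwo.continuousOn fun x hx => ?_
  rw [interior_Icc] at hx
  rw [(hasDerivAt_wTwo x).deriv]
  exact deriv_wTwo_neg hx.1 hx.2

/-- `w_2` is strictly decreasing on [0,1], has a unique fixed point
`p* ∈ (0.5, 0.68)`, and `|w_2'(p*)| < 1`. -/
theorem wTwo_stable_fixed_point :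
    StrictAntiOn wTwo (Set.Icc 0 1) ∧
    ∃ r : ℝ, r ∈ Set.Ioo (0.5 : ℝ) 0.68 ∧ wTwo r = r ∧
      (∀ s ∈ Set.Icc (0:ℝ) 1, wTwo s = s → s = r) ∧
      |deriv wTwo r| < 1 := by
  obtain ⟨r, ⟨hr₀, hr₁⟩, hfix⟩ := exists_mem_Ioo_apply_eq_self (by norm_num : (0.5 : ℝ) ≤ 0.6)
    continuous_wTwo.continuousOn (by norm_num [wTwo_eq]) (by norm_num [wTwo_eq])
  have hr : r ∈ Icc (0 : ℝ) 1 := ⟨by linarith, by linarith⟩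
  refine ⟨strictAntiOn_wTwo, r, ⟨hr₀, by linarith⟩, hfix,
    fun s hs hfs => strictAntiOn_wTwo.eq_of_apply_eq_self hs hr hfs hfix, ?_⟩
  rw [(hasDerivAt_wTwo r).deriv, abs_lt]
  exact ⟨neg_one_lt_deriv_wTwo (by norm_num at hr₀ ⊢; linarith) (by norm_num at hr₁ ⊢; linarith),
    by linarith [deriv_wTwo_neg (by linarith : (0 : ℝ) < r) (by linarith : r < 1)]⟩
end
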